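/- Let T, X, X', Z be finite-valued random variables such that I(Z; (X', T) | X) = 0 (i.e., Z is a representation of X, conditionally independent of (X',T) given X). Then H(T | Z) ≤ H(T) + I(X; X' | T) + I(Z; X | (X', T)) - I(Z; X'). -/

import Mathlib

/-
Discrete probability setup: a finite sample space `Ω` with weight function `p`
(nonnegative, summing to 1).  Random variables are functions out of `Ω` into
nonempty finite sets.  `pr p X x = P(X = x)`, `ent` is Shannon entropy
(natural log, with `0 · log 0 = 0` since `Real.log 0 = 0`), `mi` is mutual
information `I(X;Y) = H(X) + H(Y) - H(X,Y)`, and `cmi` is conditional mutual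
information `I(X;Y|W) = ∑ w, P(W=w) · I(X;Y | W=w)` computed with respect to
the conditional distribution `condp p W w` (terms with `P(W=w)=0` vanish).
`klDivF` is the discrete Kullback–Leibler divergence with the convention that
terms with `p s = 0` contribute `0` (indeed `0 * log 0 = 0` in Lean).
-/

open scoped Classical
open Finset

noncomputable def pr {Ω α : Type*} [Fintype Ω] (p : Ω → ℝ) (X : Ω → α) (x : α) : ℝ :=
  ∑ ω, if X ω = x then p ω else 0

noncomputable def ent {Ω α : Type*} [Fintype Ω] [Fintype α] (p : Ω → ℝ) (X : Ω → α) : ℝ :=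
  -∑ x, pr p X x * Real.log (pr p X x)

noncomputable def mi {Ω α β : Type*} [Fintype Ω] [Fintype α] [Fintype β]
    (p : Ω → ℝ) (X : Ω → α) (Y : Ω → β) : ℝ :=
  ent p X + ent p Y - ent p (fun ω => (X ω, Y ω))

noncomputable def condp {Ω γ : Type*} [Fintype Ω] (p : Ω → ℝ) (W : Ω → γ) (w : γ) : Ω → ℝ :=
  fun ω => if W ω = w then p ω / pr p W w else 0

noncomputable def cmi {Ω α β γ : Type*} [Fintype Ω] [Fintype α] [Fintype β] [Fintype γ]
    (p : Ω → ℝ) (X : Ω → α) (Y : Ω → β) (W : Ω → γ) : ℝ :=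
  ∑ w, pr p W w * mi (condp p W w) X Y

noncomputable def klDivF {S : Type*} [Fintype S] (p q : S → ℝ) : ℝ :=
  ∑ s, p s * Real.log (p s / q s)

set_option linter.unusedSectionVars false
section Lemmas
variable {Ω α β γ : Type*} [Fintype Ω] [Fintype α] [Fintype β] [Fintype γ]

lemma pr_nonneg (p : Ω → ℝ) (hp : ∀ ω, 0 ≤ p ω) (X : Ω → α) (x : α) : 0 ≤ pr p X x :=
  Finset.sum_nonneg fun ω _ => by by_cases h : X ω = x <;> simp [h, hp ω]

lemma sum_pr (p : Ω → ℝ) (X : Ω → α) : ∑ x, pr p X x = ∑ ω, p ω := by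
  unfold pr; rw [Finset.sum_comm]; simp

lemma pr_marg_snd (p : Ω → ℝ) (Y : Ω → β) (W : Ω → γ) (w : γ) :
    ∑ y, pr p (fun ω => (Y ω, W ω)) (y, w) = pr p W w := by
  unfold pr; rw [Finset.sum_comm]
  refine Finset.sum_congr rfl fun ω _ => ?_
  by_cases h : W ω = w <;> simp [Prod.ext_iff, h]

lemma pr_marg_fst (p : Ω → ℝ) (X : Ω → α) (Y : Ω → β) (x : α) :
    ∑ y, pr p (fun ω => (X ω, Y ω)) (x, y) = pr p X x := by
  unfold pr; rw [Finset.sum_comm]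
  refine Finset.sum_congr rfl fun ω _ => ?_
  by_cases h : X ω = x <;> simp [Prod.ext_iff, h]

lemma pr_pair_le_snd (p : Ω → ℝ) (hp : ∀ ω, 0 ≤ p ω) (Y : Ω → β) (W : Ω → γ) (y : β) (w : γ) :
    pr p (fun ω => (Y ω, W ω)) (y, w) ≤ pr p W w := by
  rw [← pr_marg_snd p Y W w]
  exact Finset.single_le_sum (f := fun y => pr p (fun ω => (Y ω, W ω)) (y, w))
    (fun b _ => pr_nonneg p hp _ _) (mem_univ y)

lemma pr_pair_le_fst (p : Ω → ℝ) (hp : ∀ ω, 0 ≤ p ω) (X : Ω → α) (Y : Ω → β) (x : α) (y : β) :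
    pr p (fun ω => (X ω, Y ω)) (x, y) ≤ pr p X x := by
  rw [← pr_marg_fst p X Y x]
  exact Finset.single_le_sum (f := fun y => pr p (fun ω => (X ω, Y ω)) (x, y))
    (fun b _ => pr_nonneg p hp _ _) (mem_univ y)

lemma ent_congr (p : Ω → ℝ) (X : Ω → α) (Y : Ω → β) (e : α → β)
    (he : Function.Injective e) (hXY : ∀ ω, Y ω = e (X ω)) : ent p Y = ent p X := by
  have h1 : ∀ x, pr p Y (e x) = pr p X x := fun x =>
    Finset.sum_congr rfl fun ω _ => by rw [hXY]; simp [he.eq_iff]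
  have h2 : ∀ b, b ∉ Finset.univ.image e → pr p Y b = 0 := fun b hb => by
    refine Finset.sum_eq_zero fun ω _ => ?_
    rw [hXY]
    have : e (X ω) ≠ b := fun hc => hb (by simpa [hc] using Finset.mem_image_of_mem e (mem_univ (X ω)))
    simp [this]
  unfold ent
  congr 1
  rw [← Finset.sum_subset (Finset.subset_univ (Finset.univ.image e))
      (fun b _ hb => by simp [h2 b hb]),
    Finset.sum_image (fun x _ x' _ h => he h)]
  exact Finset.sum_congr rfl fun x _ => by rw [h1]

end Lemmas

set_option linter.unusedSectionVars false
section Lemmas2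
variable {Ω α β γ : Type*} [Fintype Ω] [Fintype α] [Fintype β] [Fintype γ]

lemma pr_cond (p : Ω → ℝ) (Y : Ω → β) (W : Ω → γ) (w : γ) (y : β) :
    pr (condp p W w) Y y = pr p (fun ω => (Y ω, W ω)) (y, w) / pr p W w := by
  unfold pr condp
  rw [Finset.sum_div]
  refine Finset.sum_congr rfl fun ω _ => ?_
  by_cases h1 : Y ω = y <;> by_cases h2 : W ω = w <;> simp [h1, h2, Prod.ext_iff, pr]

lemma pr_pair_eq_zero (p : Ω → ℝ) (hp : ∀ ω, 0 ≤ p ω) (Y : Ω → β) (W : Ω → γ) (y : β) (w : γ)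
    (hw : pr p W w = 0) : pr p (fun ω => (Y ω, W ω)) (y, w) = 0 :=
  le_antisymm (hw ▸ pr_pair_le_snd p hp Y W y w) (pr_nonneg p hp _ _)

/-- Chain rule: `∑ w, P(W=w) H(Y | W=w) = H(Y,W) - H(W)`. -/
lemma cond_ent_chain (p : Ω → ℝ) (hp : ∀ ω, 0 ≤ p ω) (Y : Ω → β) (W : Ω → γ) :
    ∑ w, pr p W w * ent (condp p W w) Y
      = ent p (fun ω => (Y ω, W ω)) - ent p W := by
  have key : ∀ w y, pr p W w * (pr (condp p W w) Y y * Real.log (pr (condp p W w) Y y))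
      = pr p (fun ω => (Y ω, W ω)) (y, w) * Real.log (pr p (fun ω => (Y ω, W ω)) (y, w))
        - pr p (fun ω => (Y ω, W ω)) (y, w) * Real.log (pr p W w) := by
    intro w y
    by_cases hw : pr p W w = 0
    · simp [pr_pair_eq_zero p hp Y W y w hw, hw]
    · rw [pr_cond]
      by_cases hq : pr p (fun ω => (Y ω, W ω)) (y, w) = 0
      · simp [hq]
      · rw [Real.log_div hq hw]
        field_simp
  have lhs : ∑ w, pr p W w * ent (condp p W w) Y
      = -∑ w, ∑ y, (pr p (fun ω => (Y ω, W ω)) (y, w) * Real.log (pr p (fun ω => (Y ω, W ω)) (y, w))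
          - pr p (fun ω => (Y ω, W ω)) (y, w) * Real.log (pr p W w)) := by
    unfold ent
    rw [← Finset.sum_neg_distrib]
    refine Finset.sum_congr rfl fun w _ => ?_
    rw [mul_neg, Finset.mul_sum]
    congr 1
    exact Finset.sum_congr rfl fun y _ => key w y
  rw [lhs]
  have e1 : ent p (fun ω => (Y ω, W ω)) = -∑ w, ∑ y,
      pr p (fun ω => (Y ω, W ω)) (y, w) * Real.log (pr p (fun ω => (Y ω, W ω)) (y, w)) := by
    unfold ent
    rw [Fintype.sum_prod_type, Finset.sum_comm]
  have e2 : ∀ w, ∑ y, pr p (fun ω => (Y ω, W ω)) (y, w) * Real.log (pr p W w)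
      = pr p W w * Real.log (pr p W w) := fun w => by
    rw [← Finset.sum_mul, pr_marg_snd]
  have e3 : ent p W = -∑ w, pr p W w * Real.log (pr p W w) := rfl
  have e4 : ∑ w, ∑ y, pr p (fun ω => (Y ω, W ω)) (y, w) * Real.log (pr p W w)
      = ∑ w, pr p W w * Real.log (pr p W w) := Finset.sum_congr rfl fun w _ => e2 w
  simp only [Finset.sum_sub_distrib]
  rw [e1, e3, e4]
  ring

end Lemmas2

set_option linter.unusedSectionVars false
section Lemmas3
variable {Ω α β γ : Type*} [Fintype Ω] [Fintype α] [Fintype β] [Fintype γ]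

lemma mi_nonneg (p : Ω → ℝ) (hp : ∀ ω, 0 ≤ p ω) (hsum : ∑ ω, p ω = 1)
    (X : Ω → α) (Y : Ω → β) : 0 ≤ mi p X Y := by
  set q : α × β → ℝ := pr p (fun ω => (X ω, Y ω)) with hq
  have hqnn : ∀ ab, 0 ≤ q ab := fun ab => pr_nonneg p hp _ _
  have eX : ent p X = -∑ a, ∑ b, q (a, b) * Real.log (pr p X a) := by
    unfold ent
    congr 1
    refine Finset.sum_congr rfl fun a _ => ?_
    rw [← pr_marg_fst p X Y a, Finset.sum_mul]
  have eY : ent p Y = -∑ a, ∑ b, q (a, b) * Real.log (pr p Y b) := by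
    unfold ent
    rw [Finset.sum_comm (f := fun a b => q (a, b) * Real.log (pr p Y b))]
    congr 1
    refine Finset.sum_congr rfl fun b _ => ?_
    rw [← pr_marg_snd p X Y b, Finset.sum_mul]
  have eXY : ent p (fun ω => (X ω, Y ω)) = -∑ a, ∑ b, q (a, b) * Real.log (q (a, b)) := by
    unfold ent
    rw [Fintype.sum_prod_type]
  have hmi : mi p X Y = ∑ a, ∑ b,
      (q (a, b) * Real.log (q (a, b)) - q (a, b) * Real.log (pr p X a)
        - q (a, b) * Real.log (pr p Y b)) := by
    unfold mi
    rw [eX, eY, eXY]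
    simp only [Finset.sum_sub_distrib]
    ring
  rw [hmi]
  have termwise : ∀ a b,
      q (a, b) - pr p X a * pr p Y b ≤
        q (a, b) * Real.log (q (a, b)) - q (a, b) * Real.log (pr p X a)
          - q (a, b) * Real.log (pr p Y b) := by
    intro a b
    by_cases hq0 : q (a, b) = 0
    · have h0 := mul_nonneg (pr_nonneg p hp X a) (pr_nonneg p hp Y b)
      simp only [hq0, zero_mul, mul_zero, sub_zero, zero_sub, sub_self]
      linarith
    · have hqpos : 0 < q (a, b) := lt_of_le_of_ne (hqnn _) (Ne.symm hq0)
      have hpa : 0 < pr p X a := lt_of_lt_of_le hqpos (pr_pair_le_fst p hp X Y a b)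
      have hpb : 0 < pr p Y b := lt_of_lt_of_le hqpos (by
        have := pr_pair_le_snd p hp X Y a b; exact this)
      have hx : 0 < pr p X a * pr p Y b / q (a, b) := by positivity
      have hlog : Real.log (pr p X a * pr p Y b / q (a, b))
          ≤ pr p X a * pr p Y b / q (a, b) - 1 := Real.log_le_sub_one_of_pos hx
      rw [Real.log_div (by positivity) hq0, Real.log_mul (ne_of_gt hpa) (ne_of_gt hpb)] at hlog
      have h2 := mul_le_mul_of_nonneg_left hlog (le_of_lt hqpos)
      have h3 : q (a, b) * (pr p X a * pr p Y b / q (a, b) - 1)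
          = pr p X a * pr p Y b - q (a, b) := by
        field_simp
      rw [h3] at h2
      linarith [h2]
  have hsumq : ∑ a, ∑ b, q (a, b) = 1 := by
    have : ∀ a, ∑ b, q (a, b) = pr p X a := fun a => pr_marg_fst p X Y a
    rw [Finset.sum_congr rfl fun a _ => this a, sum_pr, hsum]
  have hsumprod : ∑ a, ∑ b, pr p X a * pr p Y b = 1 := by
    have : ∀ a, ∑ b, pr p X a * pr p Y b = pr p X a * 1 := fun a => by
      rw [← Finset.mul_sum, sum_pr, hsum]
    rw [Finset.sum_congr rfl fun a _ => this a]
    simp only [mul_one]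
    rw [sum_pr, hsum]
  calc (0:ℝ) = ∑ a, ∑ b, (q (a, b) - pr p X a * pr p Y b) := by
        simp only [Finset.sum_sub_distrib, hsumq, hsumprod, sub_self]
    _ ≤ _ := Finset.sum_le_sum fun a _ => Finset.sum_le_sum fun b _ => termwise a b

lemma cmi_nonneg (p : Ω → ℝ) (hp : ∀ ω, 0 ≤ p ω)
    (X : Ω → α) (Y : Ω → β) (W : Ω → γ) : 0 ≤ cmi p X Y W := by
  refine Finset.sum_nonneg fun w _ => ?_
  by_cases hw : pr p W w = 0
  · simp [hw]
  · have hwpos : 0 < pr p W w := lt_of_le_of_ne (pr_nonneg p hp W w) (Ne.symm hw)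
    refine mul_nonneg (le_of_lt hwpos) (mi_nonneg _ (fun ω => ?_) ?_ X Y)
    · by_cases h : W ω = w
      · simpa [condp, h] using div_nonneg (hp ω) (pr_nonneg p hp W w)
      · simp [condp, h]
    · unfold condp
      rw [show (∑ ω, if W ω = w then p ω / pr p W w else 0)
          = (∑ ω, if W ω = w then p ω else 0) / pr p W w from by
        rw [Finset.sum_div]
        exact Finset.sum_congr rfl fun ω _ => by split <;> simp]
      exact div_self hw

lemma cmi_eq (p : Ω → ℝ) (hp : ∀ ω, 0 ≤ p ω)
    (X : Ω → α) (Y : Ω → β) (W : Ω → γ) :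
    cmi p X Y W = ent p (fun ω => (X ω, W ω)) + ent p (fun ω => (Y ω, W ω))
      - ent p W - ent p (fun ω => ((X ω, Y ω), W ω)) := by
  unfold cmi mi
  have : ∀ w, pr p W w * (ent (condp p W w) X + ent (condp p W w) Y
      - ent (condp p W w) (fun ω => (X ω, Y ω)))
      = pr p W w * ent (condp p W w) X + pr p W w * ent (condp p W w) Y
        - pr p W w * ent (condp p W w) (fun ω => (X ω, Y ω)) := fun w => by ring
  rw [Finset.sum_congr rfl fun w _ => this w]
  simp only [Finset.sum_sub_distrib, Finset.sum_add_distrib]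
  rw [cond_ent_chain p hp X W, cond_ent_chain p hp Y W,
    cond_ent_chain p hp (fun ω => (X ω, Y ω)) W]
  ring

end Lemmas3


/-- If `I(Z; (X',T) | X) = 0` then
`H(T|Z) ≤ H(T) + I(X; X' | T) + I(Z; X | (X',T)) - I(Z; X')`,
where `H(T|Z) = H(T,Z) - H(Z)`. -/
theorem cond_entropy_upper_bound
    {Ω 𝒯 𝒳 𝒳' 𝒵 : Type*} [Fintype Ω] [Fintype 𝒯] [Fintype 𝒳] [Fintype 𝒳'] [Fintype 𝒵]
    [Nonempty 𝒯] [Nonempty 𝒳] [Nonempty 𝒳'] [Nonempty 𝒵]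
    (p : Ω → ℝ) (hp : ∀ ω, 0 ≤ p ω) (hsum : ∑ ω, p ω = 1)
    (T : Ω → 𝒯) (X : Ω → 𝒳) (X' : Ω → 𝒳') (Z : Ω → 𝒵)
    (h : cmi p Z (fun ω => (X' ω, T ω)) X = 0) :
    ent p (fun ω => (T ω, Z ω)) - ent p Z ≤
      ent p T + cmi p X X' T + cmi p Z X (fun ω => (X' ω, T ω)) - mi p Z X' := by
  have hc1 := cmi_eq p hp X X' T
  have hc2 := cmi_eq p hp Z X (fun ω => (X' ω, T ω))
  have hh := cmi_eq p hp Z (fun ω => (X' ω, T ω)) X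
  rw [h] at hh
  have hn1' := cmi_nonneg p hp X' X (fun ω => (T ω, Z ω))
  rw [cmi_eq p hp X' X (fun ω => (T ω, Z ω))] at hn1'
  have hn2' := cmi_nonneg p hp Z X X'
  rw [cmi_eq p hp Z X X'] at hn2'
  have hn5' := cmi_nonneg p hp Z T (fun ω => (X ω, X' ω))
  rw [cmi_eq p hp Z T (fun ω => (X ω, X' ω))] at hn5'
  have hn6' := cmi_nonneg p hp Z T X
  rw [cmi_eq p hp Z T X] at hn6'
  have hmi : mi p Z X' = ent p Z + ent p X' - ent p (fun ω => (Z ω, X' ω)) := rfl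
  -- recoding equalities (all to canonical forms)
  have E1 : ent p (fun ω => ((Z ω, X ω), (X' ω, T ω)))
      = ent p (fun ω => ((Z ω, (X' ω, T ω)), X ω)) :=
    ent_congr p (fun ω => ((Z ω, (X' ω, T ω)), X ω)) _
      (fun q => ((q.1.1, q.2), q.1.2))
      (fun a b hab => by simp only [Prod.ext_iff] at hab ⊢; tauto) (fun ω => rfl)
  have E2 : ent p (fun ω => ((X' ω, X ω), (T ω, Z ω)))
      = ent p (fun ω => ((Z ω, (X' ω, T ω)), X ω)) :=
    ent_congr p (fun ω => ((Z ω, (X' ω, T ω)), X ω)) _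
      (fun q => ((q.1.2.1, q.2), (q.1.2.2, q.1.1)))
      (fun a b hab => by simp only [Prod.ext_iff] at hab ⊢; tauto) (fun ω => rfl)
  have E3 : ent p (fun ω => ((Z ω, T ω), (X ω, X' ω)))
      = ent p (fun ω => ((Z ω, (X' ω, T ω)), X ω)) :=
    ent_congr p (fun ω => ((Z ω, (X' ω, T ω)), X ω)) _
      (fun q => ((q.1.1, q.1.2.2), (q.2, q.1.2.1)))
      (fun a b hab => by simp only [Prod.ext_iff] at hab ⊢; tauto) (fun ω => rfl)
  have F1 : ent p (fun ω => (X' ω, (T ω, Z ω)))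
      = ent p (fun ω => (Z ω, (X' ω, T ω))) :=
    ent_congr p (fun ω => (Z ω, (X' ω, T ω))) _
      (fun q => (q.2.1, (q.2.2, q.1)))
      (fun a b hab => by simp only [Prod.ext_iff] at hab ⊢; tauto) (fun ω => rfl)
  have F2 : ent p (fun ω => (X ω, (T ω, Z ω)))
      = ent p (fun ω => ((Z ω, T ω), X ω)) :=
    ent_congr p (fun ω => ((Z ω, T ω), X ω)) _
      (fun q => (q.2, (q.1.2, q.1.1)))
      (fun a b hab => by simp only [Prod.ext_iff] at hab ⊢; tauto) (fun ω => rfl)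
  have F3 : ent p (fun ω => (X ω, (X' ω, T ω)))
      = ent p (fun ω => ((X ω, X' ω), T ω)) :=
    ent_congr p (fun ω => ((X ω, X' ω), T ω)) _
      (fun q => (q.1.1, (q.1.2, q.2)))
      (fun a b hab => by simp only [Prod.ext_iff] at hab ⊢; tauto) (fun ω => rfl)
  have F4 : ent p (fun ω => ((X' ω, T ω), X ω))
      = ent p (fun ω => ((X ω, X' ω), T ω)) :=
    ent_congr p (fun ω => ((X ω, X' ω), T ω)) _
      (fun q => ((q.1.2, q.2), q.1.1))
      (fun a b hab => by simp only [Prod.ext_iff] at hab ⊢; tauto) (fun ω => rfl)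
  have F5 : ent p (fun ω => (T ω, (X ω, X' ω)))
      = ent p (fun ω => ((X ω, X' ω), T ω)) :=
    ent_congr p (fun ω => ((X ω, X' ω), T ω)) _
      (fun q => (q.2, q.1))
      (fun a b hab => by simp only [Prod.ext_iff] at hab ⊢; tauto) (fun ω => rfl)
  have F6 : ent p (fun ω => (Z ω, (X ω, X' ω)))
      = ent p (fun ω => ((Z ω, X ω), X' ω)) :=
    ent_congr p (fun ω => ((Z ω, X ω), X' ω)) _
      (fun q => (q.1.1, (q.1.2, q.2)))
      (fun a b hab => by simp only [Prod.ext_iff] at hab ⊢; tauto) (fun ω => rfl)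
  have F7 : ent p (fun ω => (T ω, X ω))
      = ent p (fun ω => (X ω, T ω)) :=
    ent_congr p (fun ω => (X ω, T ω)) _
      (fun q => (q.2, q.1))
      (fun a b hab => by simp only [Prod.ext_iff] at hab ⊢; tauto) (fun ω => rfl)
  rw [E1, F3] at hc2
  rw [F4] at hh
  rw [E2, F1, F2] at hn1'

  rw [E3, F5, F6] at hn5'
  rw [F7] at hn6'
  linarith [hc1, hc2, hh, hn1', hn2', hn5', hn6', hmi]
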